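/- Let τ > 0, A ≥ 0, and let S ⊆ ℂ \ [−2, 2] be a set such that for every finite subset F ⊆ S one has ∑_{z∈F} dist(z, [−2, 2])^{3+τ} / |z² − 4| ≤ A. Let 0 < r < R and define N := {z ∈ ℂ : −2 ≤ Re z ≤ 2 and r < |Im z| < R}. Then S ∩ N is finite with cardinality #(S ∩ N) ≤ ((16 + R²)/r^{3+τ}) · A. -/

import Mathlib

/-!
On the region `N` the distance to `[-2, 2]` is at least `|Im z| > r`, while
`|z² - 4| ≤ |z|² + 4 ≤ 8 + R²`. Hence every point of `S ∩ N` contributes at least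
`r^{3+τ} / (16 + R²)` to the sum, and a set all of whose finite subsets carry total weight
at most `A` can contain at most `A` divided by that much.
-/

open Set Metric

theorem Set.finite_and_ncard_le_of_sum_le {α : Type*} {T : Set α} {f : α → ℝ} {c A : ℝ}
    (hc : 0 < c) (hf : ∀ z ∈ T, c ≤ f z)
    (hsum : ∀ F : Finset α, ↑F ⊆ T → ∑ z ∈ F, f z ≤ A) :
    T.Finite ∧ (T.ncard : ℝ) ≤ A / c := by
  have card_le : ∀ F : Finset α, ↑F ⊆ T → (F.card : ℝ) ≤ A / c := fun F hF => by
    rw [le_div_iff₀ hc]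
    calc (F.card : ℝ) * c = ∑ _z ∈ F, c := by rw [Finset.sum_const, nsmul_eq_mul]
      _ ≤ ∑ z ∈ F, f z := Finset.sum_le_sum fun z hz => hf z (hF hz)
      _ ≤ A := hsum F hF
  have hfin : T.Finite := by
    by_contra hinf
    obtain ⟨F, hF, hcard⟩ := Set.Infinite.exists_subset_card_eq hinf (⌊A / c⌋₊ + 1)
    have hlt : A / c < (⌊A / c⌋₊ + 1 : ℕ) := by
      push_cast
      exact Nat.lt_floor_add_one _
    linarith [hcard ▸ card_le F hF]
  refine ⟨hfin, ?_⟩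
  rw [Set.ncard_eq_toFinset_card _ hfin]
  exact card_le hfin.toFinset (by simp)

theorem Complex.abs_im_le_infDist_ofReal_image {s : Set ℝ} (hs : s.Nonempty) (z : ℂ) :
    |z.im| ≤ infDist z ((fun x : ℝ => (x : ℂ)) '' s) := by
  rw [le_infDist (hs.image _)]
  rintro _ ⟨x, -, rfl⟩
  simpa [Complex.dist_eq] using Complex.abs_im_le_norm (z - x)

theorem Complex.norm_sq_sub_four_le {z : ℂ} {R : ℝ} (hre : |z.re| ≤ 2) (him : |z.im| ≤ R) :
    ‖z ^ 2 - 4‖ ≤ 8 + R ^ 2 := by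
  have hnorm : ‖z ^ 2‖ = z.re ^ 2 + z.im ^ 2 := by
    rw [norm_pow, Complex.sq_norm, Complex.normSq_apply]
    ring
  have hre2 : z.re ^ 2 ≤ 4 := by nlinarith [sq_abs z.re, abs_nonneg z.re]
  have him2 : z.im ^ 2 ≤ R ^ 2 := by nlinarith [sq_abs z.im, abs_nonneg z.im]
  calc ‖z ^ 2 - 4‖ ≤ ‖z ^ 2‖ + ‖(4 : ℂ)‖ := norm_sub_le _ _
    _ ≤ 8 + R ^ 2 := by rw [hnorm, Complex.norm_ofNat]; linarith

theorem Complex.div_le_infDist_rpow_div_norm_sq_sub_four {p r R : ℝ} (hp : 0 ≤ p) (hr : 0 < r)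
    {z : ℂ} (hz : -2 ≤ z.re ∧ z.re ≤ 2 ∧ r < |z.im| ∧ |z.im| < R) :
    r ^ p / (16 + R ^ 2) ≤
      infDist z ((fun x : ℝ => (x : ℂ)) '' Icc (-2 : ℝ) 2) ^ p / ‖z ^ 2 - 4‖ := by
  obtain ⟨hre₁, hre₂, him₁, him₂⟩ := hz
  have hdist : r ≤ infDist z ((fun x : ℝ => (x : ℂ)) '' Icc (-2 : ℝ) 2) :=
    him₁.le.trans (abs_im_le_infDist_ofReal_image ⟨0, by norm_num⟩ z)
  have hden_pos : 0 < ‖z ^ 2 - 4‖ := by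
    have him : z.im ≠ 0 := fun h => by simp [h] at him₁; linarith
    refine norm_pos_iff.mpr fun h => ?_
    rcases sq_eq_sq_iff_eq_or_eq_neg.mp (by linear_combination h : z ^ 2 = 2 ^ 2) with h2 | h2 <;>
      simp [h2] at him
  have hden : ‖z ^ 2 - 4‖ ≤ 16 + R ^ 2 := by
    linarith [norm_sq_sub_four_le (abs_le.mpr ⟨hre₁, hre₂⟩) him₂.le, sq_nonneg R]
  exact div_le_div₀ (Real.rpow_nonneg infDist_nonneg _) (Real.rpow_le_rpow hr.le hdist hp)
    hden_pos hden

theorem eigenvalue_count_middle_general (τ : ℝ) (hτ : 0 < τ) (A : ℝ)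
    (S : Set ℂ)
    (hsum : ∀ F : Finset ℂ, ↑F ⊆ S →
      ∑ z ∈ F, (Metric.infDist z ((fun x : ℝ => (x : ℂ)) '' Set.Icc (-2 : ℝ) 2)) ^ (3 + τ) /
        ‖z ^ 2 - 4‖ ≤ A)
    (r R : ℝ) (hr : 0 < r) :
    (S ∩ {z : ℂ | -2 ≤ z.re ∧ z.re ≤ 2 ∧ r < |z.im| ∧ |z.im| < R}).Finite ∧
    ((S ∩ {z : ℂ | -2 ≤ z.re ∧ z.re ≤ 2 ∧ r < |z.im| ∧
        |z.im| < R}).ncard : ℝ) ≤ (16 + R ^ 2) / r ^ (3 + τ) * A := by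
  have hweight : 0 < r ^ (3 + τ) / (16 + R ^ 2) := by positivity
  have h := Set.finite_and_ncard_le_of_sum_le hweight
    (fun z hz => Complex.div_le_infDist_rpow_div_norm_sq_sub_four (by linarith) hr hz.2)
    (fun F hF => hsum F (hF.trans inter_subset_left))
  rwa [div_div_eq_mul_div, mul_div_assoc, mul_comm] at h

/-- Eigenvalue counting in the region `N = {-2 ≤ Re z ≤ 2, r < |Im z| < R}`:
a Lieb–Thirring type bound with constant `A` implies
`#(S ∩ N) ≤ ((16+R²)/r^{3+τ})·A`. -/
theorem eigenvalue_count_middle (τ : ℝ) (hτ : 0 < τ) (A : ℝ) (hA : 0 ≤ A)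
    (S : Set ℂ) (hS : S ⊆ ((fun x : ℝ => (x : ℂ)) '' Set.Icc (-2 : ℝ) 2)ᶜ)
    (hsum : ∀ F : Finset ℂ, ↑F ⊆ S →
      ∑ z ∈ F, (Metric.infDist z ((fun x : ℝ => (x : ℂ)) '' Set.Icc (-2 : ℝ) 2)) ^ (3 + τ) /
        ‖z ^ 2 - 4‖ ≤ A)
    (r R : ℝ) (hr : 0 < r) (hrR : r < R) :
    (S ∩ {z : ℂ | -2 ≤ z.re ∧ z.re ≤ 2 ∧ r < |z.im| ∧ |z.im| < R}).Finite ∧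
    ((S ∩ {z : ℂ | -2 ≤ z.re ∧ z.re ≤ 2 ∧ r < |z.im| ∧
        |z.im| < R}).ncard : ℝ) ≤ (16 + R ^ 2) / r ^ (3 + τ) * A :=
  eigenvalue_count_middle_general τ hτ A S hsum r R hr
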